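/- arXiv:0907.0928 — 2 statements merged into one kernel-verified Lean document; each statement's English description precedes it below -/
import Mathlib

section
/- Let m ≥ 0, and suppose real numbers a₁, a₃, …, a_{2m+1} satisfy a_{2j+1} = −((2m−2j+2)(2m−2j+1))/((2j+1)·2j) a_{2j−1} for 1 ≤ j ≤ m, and let B(j) = ∫₀^{π/2} (cos φ)^{2j+1}(sin φ)^{2m−2j} dφ. Then Σ_{j=0}^{m} a_{2j+1} B(j) = (1/(2m+1)) a₁ B(0) = ((−1)^m/(2m+1)) a_{2m+1}. -/
/-!
Substituting `u = sin φ` turns `B(j)` into `∫₀¹ u^{2(m-j)} (1 - u²)^j du`, and integration by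
parts gives `(2m - 2j + 1) B(j) = 2j B(j-1)`. Together with the recursion for `a`, the terms
`T_j = a_{2j+1} B(j)` satisfy `(2j+1) T_j = -(2m - 2j + 2) T_{j-1}`, so in
`(2m+1) Σ T_j = Σ (2j+1) T_j + Σ (2m-2j) T_j` everything cancels except `T_0 = a₁ / (2m+1)`.
For the second form, `(-1)^j (2j+1)! (2m-2j)! a_{2j+1}` does not depend on `j`.
-/

open Real Finset intervalIntegral

theorem integral_pow_mul_one_sub_sq_pow_succ (n q : ℕ) :
    (n + 1 : ℝ) * ∫ u in (0:ℝ)..1, u ^ n * (1 - u ^ 2) ^ (q + 1)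
      = 2 * (q + 1 : ℝ) * ∫ u in (0:ℝ)..1, u ^ (n + 2) * (1 - u ^ 2) ^ q := by
  have hderiv : ∀ u : ℝ, HasDerivAt (fun u : ℝ => u ^ (n + 1) * (1 - u ^ 2) ^ (q + 1))
      ((n + 1 : ℝ) * (u ^ n * (1 - u ^ 2) ^ (q + 1))
        - 2 * (q + 1 : ℝ) * (u ^ (n + 2) * (1 - u ^ 2) ^ q)) u := by
    intro u
    refine ((hasDerivAt_pow (n + 1) u).fun_mul ((hasDerivAt_pow (q + 1) (1 - u ^ 2)).comp u
      ((hasDerivAt_pow 2 u).const_sub 1))).congr_deriv ?_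
    simp only [Nat.add_sub_cancel, Function.comp_apply]
    push_cast
    ring
  have hFTC := integral_eq_sub_of_hasDerivAt (fun u _ => hderiv u)
    (Continuous.intervalIntegrable (by fun_prop) 0 1)
  rw [integral_sub, integral_const_mul, integral_const_mul] at hFTC
  · have hbdry :
        (1 : ℝ) ^ (n + 1) * (1 - 1 ^ 2) ^ (q + 1) - 0 ^ (n + 1) * (1 - 0 ^ 2) ^ (q + 1) = 0 := by
      simp
    linarith
  all_goals exact Continuous.intervalIntegrable (by fun_prop) 0 1

/-- The paper's `B(j)` is `cosOddSinEvenIntegral j (m - j)`. -/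
noncomputable def cosOddSinEvenIntegral (j k : ℕ) : ℝ :=
  ∫ φ in (0:ℝ)..(π / 2), cos φ ^ (2 * j + 1) * sin φ ^ (2 * k)

theorem cosOddSinEvenIntegral_eq (j k : ℕ) :
    cosOddSinEvenIntegral j k = ∫ u in (0:ℝ)..1, u ^ (2 * k) * (1 - u ^ 2) ^ j := by
  have h := integral_sin_pow_mul_cos_pow_odd (a := 0) (b := π / 2) (2 * k) j
  rw [sin_zero, sin_pi_div_two] at h
  rw [← h, cosOddSinEvenIntegral]
  simp only [mul_comm]

theorem cosOddSinEvenIntegral_zero_left (k : ℕ) :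
    cosOddSinEvenIntegral 0 k = 1 / (2 * k + 1) := by
  rw [cosOddSinEvenIntegral_eq]
  simp

theorem cosOddSinEvenIntegral_succ_left (j k : ℕ) :
    (2 * k + 1 : ℝ) * cosOddSinEvenIntegral (j + 1) k
      = 2 * (j + 1 : ℝ) * cosOddSinEvenIntegral j (k + 1) := by
  rw [cosOddSinEvenIntegral_eq, cosOddSinEvenIntegral_eq, mul_add_one 2 k]
  exact_mod_cast integral_pow_mul_one_sub_sq_pow_succ (2 * k) j

theorem mul_sum_range_eq_of_recurrence {R : Type*} [CommRing R] (m : ℕ) (T : ℕ → R)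
    (hT : ∀ j < m, (2 * j + 3 : R) * T (j + 1) + (2 * m - 2 * j : R) * T j = 0) :
    (2 * m + 1 : R) * ∑ j ∈ range (m + 1), T j = T 0 := by
  have hsplit : (2 * m + 1 : R) * ∑ j ∈ range (m + 1), T j
      = ∑ j ∈ range (m + 1), (2 * j + 1 : R) * T j
        + ∑ j ∈ range (m + 1), (2 * m - 2 * j : R) * T j := by
    rw [mul_sum, ← sum_add_distrib]
    exact sum_congr rfl fun j _ => by ring
  rw [hsplit, sum_range_succ', sum_range_succ _ m, add_add_add_comm, ← sum_add_distrib,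
    sum_eq_zero fun j hj => by push_cast; linear_combination hT j (mem_range.mp hj)]
  simp

section Coefficients

variable {m : ℕ} {a : ℕ → ℝ}
    (ha : ∀ j : ℕ, 1 ≤ j → j ≤ m →
      a (2 * j + 1) =
        -(((2 * (m : ℝ) - 2 * j + 2) * (2 * (m : ℝ) - 2 * j + 1)) /
            ((2 * (j : ℝ) + 1) * (2 * j))) * a (2 * j - 1))
include ha

theorem coeff_recurrence {j k : ℕ} (hjk : j + k + 1 = m) :
    (2 * j + 3 : ℝ) * (2 * j + 2) * a (2 * j + 3)
      = -((2 * k + 2 : ℝ) * (2 * k + 1)) * a (2 * j + 1) := by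
  have hm : (m : ℝ) = j + k + 1 := by rw [← hjk]; push_cast; ring
  have h := ha (j + 1) (by omega) (by omega)
  rw [show 2 * (j + 1) - 1 = 2 * j + 1 by omega, hm] at h
  rw [show 2 * j + 3 = 2 * (j + 1) + 1 by ring, h]
  push_cast
  field_simp
  ring

theorem neg_one_pow_mul_factorial_mul_coeff {j k : ℕ} (hjk : j + k = m) :
    (-1) ^ j * (2 * j + 1).factorial * (2 * k).factorial * a (2 * j + 1)
      = (2 * m).factorial * a 1 := by
  induction j generalizing k with
  | zero => simp [← hjk]
  | succ j ih =>
    have h := coeff_recurrence ha (j := j) (k := k) (by omega)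
    rw [← ih (k := k + 1) (by omega), show 2 * (j + 1) + 1 = 2 * j + 1 + 1 + 1 by ring,
      show 2 * (k + 1) = 2 * k + 1 + 1 by ring, Nat.factorial_succ (2 * j + 1 + 1),
      Nat.factorial_succ (2 * j + 1), Nat.factorial_succ (2 * k + 1), Nat.factorial_succ (2 * k)]
    push_cast
    linear_combination (-1) ^ (j + 1) * ((2 * j + 1).factorial * (2 * k).factorial : ℝ) * h

theorem coeff_mul_cosOddSinEvenIntegral_recurrence {j : ℕ} (hj : j < m) :
    (2 * j + 3 : ℝ) * (a (2 * (j + 1) + 1) * cosOddSinEvenIntegral (j + 1) (m - (j + 1)))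
      + (2 * m - 2 * j : ℝ) * (a (2 * j + 1) * cosOddSinEvenIntegral j (m - j)) = 0 := by
  obtain ⟨k, rfl⟩ : ∃ k, m = j + k + 1 := ⟨m - j - 1, by omega⟩
  have hB := cosOddSinEvenIntegral_succ_left j k
  have hA := coeff_recurrence ha (j := j) (k := k) rfl
  rw [show j + k + 1 - (j + 1) = k by omega, show j + k + 1 - j = k + 1 by omega,
    ← mul_right_inj' (show (2 * j + 2 : ℝ) * (2 * k + 1) ≠ 0 by positivity), mul_zero]
  push_cast
  linear_combination (2 * k + 1) * cosOddSinEvenIntegral (j + 1) k * hA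
    - (2 * k + 2) * (2 * k + 1) * a (2 * j + 1) * hB

theorem coeff_one_eq : a 1 = (2 * m + 1 : ℝ) * ((-1) ^ m * a (2 * m + 1)) := by
  have h := neg_one_pow_mul_factorial_mul_coeff ha (j := m) (k := 0) rfl
  rw [Nat.factorial_succ, Nat.mul_zero, Nat.factorial_zero] at h
  push_cast at h
  exact mul_left_cancel₀ (Nat.cast_ne_zero.mpr (2 * m).factorial_ne_zero)
    (by linear_combination -h)

end Coefficients

/-- Telescoping identity: if `a₁, a₃, …, a_{2m+1}` satisfy
`a_{2j+1} = −((2m−2j+2)(2m−2j+1))/((2j+1)·2j) a_{2j−1}` for `1 ≤ j ≤ m`, and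
`B(j) = ∫₀^{π/2} (cos φ)^{2j+1}(sin φ)^{2m−2j} dφ`, then
`Σ_{j=0}^m a_{2j+1} B(j) = (1/(2m+1)) a₁ B(0) = ((−1)^m/(2m+1)) a_{2m+1}`. -/
theorem telescoping_sum (m : ℕ) (a : ℕ → ℝ)
    (ha : ∀ j : ℕ, 1 ≤ j → j ≤ m →
      a (2 * j + 1) =
        -(((2 * (m : ℝ) - 2 * j + 2) * (2 * (m : ℝ) - 2 * j + 1)) /
            ((2 * (j : ℝ) + 1) * (2 * j))) * a (2 * j - 1)) :
    (∑ j ∈ Finset.range (m + 1),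
        a (2 * j + 1) *
          ∫ φ in (0:ℝ)..(π / 2), (Real.cos φ) ^ (2 * j + 1) * (Real.sin φ) ^ (2 * m - 2 * j))
      = (1 / (2 * (m : ℝ) + 1)) * a 1 *
          ∫ φ in (0:ℝ)..(π / 2), Real.cos φ * (Real.sin φ) ^ (2 * m) ∧
    (∑ j ∈ Finset.range (m + 1),
        a (2 * j + 1) *
          ∫ φ in (0:ℝ)..(π / 2), (Real.cos φ) ^ (2 * j + 1) * (Real.sin φ) ^ (2 * m - 2 * j))
      = ((-1 : ℝ) ^ m / (2 * (m : ℝ) + 1)) * a (2 * m + 1) := by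
  set T : ℕ → ℝ := fun j => a (2 * j + 1) * cosOddSinEvenIntegral j (m - j)
  have hsum_eq : (∑ j ∈ range (m + 1), a (2 * j + 1) *
      ∫ φ in (0:ℝ)..(π / 2), cos φ ^ (2 * j + 1) * sin φ ^ (2 * m - 2 * j))
        = ∑ j ∈ range (m + 1), T j := by
    simp only [T, cosOddSinEvenIntegral, Nat.mul_sub]
  have hsum : ∑ j ∈ range (m + 1), T j = 1 / (2 * m + 1) * a 1 * cosOddSinEvenIntegral 0 m := by
    have hT0 : T 0 = a 1 * cosOddSinEvenIntegral 0 m := by simp [T]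
    field_simp
    linear_combination mul_sum_range_eq_of_recurrence m T
      (fun _ hj => coeff_mul_cosOddSinEvenIntegral_recurrence ha hj) + hT0
  refine ⟨?_, ?_⟩
  · rw [hsum_eq, hsum]
    simp [cosOddSinEvenIntegral]
  · rw [hsum_eq, hsum, cosOddSinEvenIntegral_zero_left, coeff_one_eq ha]
    field_simp
end

section
/- For λ, η ∈ ℂ (viewed as stereographic coordinates of points y, u ∈ S²) and t ∈ ℝ, the inequality u·y > tanh t holds if and only if e^t < |(λ̄η + 1)/(η − λ)|. -/
open Real
open scoped RealInnerProductSpace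

noncomputable section

abbrev E3 := EuclideanSpace ℝ (Fin 3)

/-!
Inverting the stereographic projection gives `(1 + |λ|²) y = (1 - |λ|², 2 Re λ, 2 Im λ)`, and
likewise for `u`. With `A = |λ̄η + 1|` and `B = |η - λ|`, the identities
`A² + B² = (1 + |λ|²)(1 + |η|²)` and `A² - B² = (1 - |λ|²)(1 - |η|²) + 4 Re(λ̄η)` then give
`u·y = (A² - B²)/(A² + B²)`. As `tanh t = (e^{2t} - 1)/(e^{2t} + 1)` and `s ↦ (s - 1)/(s + 1)`
is increasing, `u·y > tanh t` says exactly that `e^{2t} < A²/B²`.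
-/

open ComplexConjugate

namespace Complex

theorem normSq_conj_mul_add_one_add_normSq_sub (l η : ℂ) :
    normSq (conj l * η + 1) + normSq (η - l) = (1 + normSq l) * (1 + normSq η) := by
  simp only [normSq_apply, add_re, add_im, mul_re, mul_im, sub_re, sub_im, conj_re, conj_im,
    one_re, one_im]
  ring

theorem normSq_conj_mul_add_one_sub_normSq_sub (l η : ℂ) :
    normSq (conj l * η + 1) - normSq (η - l) =
      (1 - normSq l) * (1 - normSq η) + 4 * (l.re * η.re + l.im * η.im) := by
  simp only [normSq_apply, add_re, add_im, mul_re, mul_im, sub_re, sub_im, conj_re, conj_im,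
    one_re, one_im]
  ring

end Complex

open Complex (normSq normSq_apply normSq_nonneg)

theorem Real.tanh_lt_sq_sub_sq_div_iff {a b : ℝ} (t : ℝ) (ha : 0 ≤ a) (hb : 0 < b) :
    tanh t < (a ^ 2 - b ^ 2) / (a ^ 2 + b ^ 2) ↔ exp t < a / b := by
  have htanh : tanh t = (exp t ^ 2 - 1) / (exp t ^ 2 + 1) := by
    rw [tanh_eq, exp_neg]
    field_simp
  rw [htanh, div_lt_div_iff₀ (by positivity) (by positivity), lt_div_iff₀ hb,
    ← pow_lt_pow_iff_left₀ (by positivity) ha two_ne_zero, mul_pow]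
  constructor <;> intro h <;> linarith

def stereoCoord (y : E3) : ℂ := ((y 1 : ℂ) + (y 2 : ℂ) * Complex.I) / (1 + (y 0 : ℂ))

theorem inner_eq_coord_sum (u y : E3) : ⟪u, y⟫ = u 0 * y 0 + u 1 * y 1 + u 2 * y 2 := by
  simp only [PiLp.inner_apply, Fin.sum_univ_three, RCLike.inner_apply, conj_trivial]
  ring

theorem coord_sq_sum_of_norm_eq_one {y : E3} (hy : ‖y‖ = 1) :
    y 0 ^ 2 + y 1 ^ 2 + y 2 ^ 2 = 1 := by
  have h := inner_eq_coord_sum y y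
  rw [real_inner_self_eq_norm_sq, hy] at h
  linear_combination -h

theorem stereoCoord_re (y : E3) : (stereoCoord y).re = y 1 / (1 + y 0) := by
  rw [stereoCoord, ← Complex.ofReal_one, ← Complex.ofReal_add, Complex.div_ofReal_re]
  simp

theorem stereoCoord_im (y : E3) : (stereoCoord y).im = y 2 / (1 + y 0) := by
  rw [stereoCoord, ← Complex.ofReal_one, ← Complex.ofReal_add, Complex.div_ofReal_im]
  simp

theorem one_add_normSq_stereoCoord_mul_coord {y : E3} (hy : ‖y‖ = 1) (hy0 : y 0 ≠ -1) :
    (1 + normSq (stereoCoord y)) * y 0 = 1 - normSq (stereoCoord y) ∧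
      (1 + normSq (stereoCoord y)) * y 1 = 2 * (stereoCoord y).re ∧
      (1 + normSq (stereoCoord y)) * y 2 = 2 * (stereoCoord y).im := by
  have hsq := coord_sq_sum_of_norm_eq_one hy
  have ha : 1 + y 0 ≠ 0 := fun h ↦ hy0 (by linarith)
  have hnormSq : normSq (stereoCoord y) = 2 / (1 + y 0) - 1 := by
    rw [normSq_apply, stereoCoord_re, stereoCoord_im]
    field_simp
    linear_combination hsq
  simp only [hnormSq, stereoCoord_re, stereoCoord_im]
  refine ⟨?_, ?_, ?_⟩ <;> field_simp <;> ring

theorem inner_eq_stereoCoord {u y : E3} (hu : ‖u‖ = 1) (hy : ‖y‖ = 1)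
    (hu0 : u 0 ≠ -1) (hy0 : y 0 ≠ -1) :
    ⟪u, y⟫ = (normSq (conj (stereoCoord y) * stereoCoord u + 1) -
        normSq (stereoCoord u - stereoCoord y)) /
      (normSq (conj (stereoCoord y) * stereoCoord u + 1) +
        normSq (stereoCoord u - stereoCoord y)) := by
  set l := stereoCoord y
  set η := stereoCoord u
  obtain ⟨hy₀, hy₁, hy₂⟩ := one_add_normSq_stereoCoord_mul_coord hy hy0
  obtain ⟨hu₀, hu₁, hu₂⟩ := one_add_normSq_stereoCoord_mul_coord hu hu0
  have hden : (1 + normSq l) * (1 + normSq η) ≠ 0 :=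
    (mul_pos (by linarith [normSq_nonneg l]) (by linarith [normSq_nonneg η])).ne'
  rw [Complex.normSq_conj_mul_add_one_add_normSq_sub,
    Complex.normSq_conj_mul_add_one_sub_normSq_sub, eq_div_iff hden, inner_eq_coord_sum]
  linear_combination ((1 + normSq l) * y 0) * hu₀ + (1 - normSq η) * hy₀
    + ((1 + normSq l) * y 1) * hu₁ + (2 * η.re) * hy₁
    + ((1 + normSq l) * y 2) * hu₂ + (2 * η.im) * hy₂

/-- In stereographic coordinates `λ = (y₂+iy₃)/(1+y₁)`, `η = (u₂+iu₃)/(1+u₁)`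
of points `y, u ∈ S²`, the inequality `u·y > tanh t` holds if and only if
`e^t < |(λ̄η + 1)/(η − λ)|`. -/
theorem cap_stereographic (t : ℝ) (y u : E3) (hy : ‖y‖ = 1) (hu : ‖u‖ = 1)
    (hy0 : y 0 ≠ -1) (hu0 : u 0 ≠ -1) (l η : ℂ)
    (hl : l = ((y 1 : ℂ) + (y 2 : ℂ) * Complex.I) / (1 + (y 0 : ℂ)))
    (hη : η = ((u 1 : ℂ) + (u 2 : ℂ) * Complex.I) / (1 + (u 0 : ℂ)))
    (hne : η ≠ l) :
    ⟪u, y⟫ > Real.tanh t ↔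
      Real.exp t < ‖((starRingEnd ℂ) l * η + 1) / (η - l)‖ := by
  obtain rfl : l = stereoCoord y := hl
  obtain rfl : η = stereoCoord u := hη
  rw [gt_iff_lt, inner_eq_stereoCoord hu hy hu0 hy0, ← Complex.sq_norm, ← Complex.sq_norm,
    norm_div, Real.tanh_lt_sq_sub_sq_div_iff t (norm_nonneg _) (norm_pos_iff.2 (sub_ne_zero.2 hne))]

end
end
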